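/- arXiv:2506.18826 — 6 statements merged into one kernel-verified Lean document; each statement's English description precedes it below -/
import Mathlib

section
/- Let $k$ be a field and $A$ a $\mathbb{Z}$-graded $k$-subalgebra of $k[t,t^{-1}]$ containing both an element of positive degree and an element of negative degree. Then $A$ is a principal ideal domain. -/
/-!
The exponents `m` with `T m ∈ A` form a submonoid of `ℤ`; since it contains a positive and a
negative integer it is a subgroup `gℤ` with `g ≠ 0`. As `A` is graded, it is spanned by these
monomials, so `A` is the image of `k[T;T⁻¹]` under `T ↦ T ^ g`. A quotient of the principal ideal
ring `k[T;T⁻¹]`, a localization of `k[X]`, is again principal.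
-/

/-- A `ℤ`-graded `R`-subalgebra of the Laurent polynomial ring `R[t, t⁻¹]` (deg t = 1):
a subalgebra spanned by the homogeneous elements it contains. -/
def IsGradedLaurentSubalgebra (R : Type*) [CommRing R]
    (A : Subalgebra R (LaurentPolynomial R)) : Prop :=
  ∀ f ∈ A, ∀ m : ℤ, LaurentPolynomial.C (AddMonoidAlgebra.coeff f m) * LaurentPolynomial.T m ∈ A

/-- A homogeneous ideal of a graded subalgebra of `R[t, t⁻¹]` : an ideal closed under
taking homogeneous components. -/
def IsHomogeneousIdeal (R : Type*) [CommRing R] (A : Subalgebra R (LaurentPolynomial R))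
    (I : Ideal A) : Prop :=
  ∀ f : A, f ∈ I → ∀ m : ℤ,
    ∀ h : LaurentPolynomial.C (AddMonoidAlgebra.coeff (f : LaurentPolynomial R) m) * LaurentPolynomial.T m ∈ A,
      (⟨_, h⟩ : A) ∈ I

open LaurentPolynomial

theorem IsLocalization.isPrincipalIdealRing {R S : Type*} [CommRing R] [CommRing S] [Algebra R S]
    (M : Submonoid R) [IsLocalization M S] [IsPrincipalIdealRing R] : IsPrincipalIdealRing S where
  principal J := by
    obtain ⟨a, ha⟩ := IsPrincipalIdealRing.principal (J.under R)
    refine ⟨algebraMap R S a, ?_⟩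
    rw [← IsLocalization.map_under M S J, ha]
    simp [Ideal.map_span, Ideal.submodule_span_eq]

instance LaurentPolynomial.instIsPrincipalIdealRing {k : Type*} [Field k] :
    IsPrincipalIdealRing k[T;T⁻¹] :=
  IsLocalization.isPrincipalIdealRing (Submonoid.powers (Polynomial.X : Polynomial k))

theorem AddSubmonoid.neg_mem_of_pos_mem_of_neg_mem (S : AddSubmonoid ℤ) {a b : ℤ} (ha : 0 < a)
    (hb : b < 0) (haS : a ∈ S) (hbS : b ∈ S) {x : ℤ} (hx : x ∈ S) : -x ∈ S := by
  rcases le_or_gt 0 x with hx0 | hx0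
  · -- `-x = (-b - 1) x + x b`
    lift x to ℕ using hx0
    have h₁ : (-b - 1).toNat • (x : ℤ) ∈ S := S.nsmul_mem hx _
    have h₂ : x • b ∈ S := S.nsmul_mem hbS _
    convert S.add_mem h₁ h₂ using 1
    simp only [nsmul_eq_mul, Int.toNat_of_nonneg (by omega : 0 ≤ -b - 1)]
    ring
  · -- `-x = (a - 1) x + (-x) a`
    have h₁ : (a - 1).toNat • x ∈ S := S.nsmul_mem hx _
    have h₂ : (-x).toNat • a ∈ S := S.nsmul_mem haS _
    convert S.add_mem h₁ h₂ using 1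
    simp only [nsmul_eq_mul, Int.toNat_of_nonneg (by omega : 0 ≤ a - 1),
      Int.toNat_of_nonneg (by omega : 0 ≤ -x)]
    ring

theorem AddSubmonoid.exists_eq_range_mul_of_pos_mem_of_neg_mem (S : AddSubmonoid ℤ) {a b : ℤ}
    (ha : 0 < a) (hb : b < 0) (haS : a ∈ S) (hbS : b ∈ S) :
    ∃ g ≠ 0, (S : Set ℤ) = Set.range (g * ·) := by
  let H : AddSubgroup ℤ :=
    { S with neg_mem' := S.neg_mem_of_pos_mem_of_neg_mem ha hb haS hbS }
  obtain ⟨g, hg⟩ := Int.subgroup_cyclic H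
  have hS : ∀ m, m ∈ S ↔ g ∣ m := fun m ↦ by
    rw [← Int.mem_zmultiples_iff, AddSubgroup.zmultiples_eq_closure, ← hg]; rfl
  refine ⟨g, ?_, Set.ext fun m ↦ (hS m).trans ?_⟩
  · rintro rfl
    exact ha.ne' (zero_dvd_iff.mp ((hS a).mp haS))
  · exact ⟨fun ⟨c, hc⟩ ↦ ⟨c, hc.symm⟩, fun ⟨c, hc⟩ ↦ ⟨c, hc.symm⟩⟩

theorem AddMonoidAlgebra.mem_range_mapDomain_iff {R M N : Type*} [Semiring R] {f : M → N}
    (hf : Function.Injective f) (x : AddMonoidAlgebra R N) :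
    x ∈ Set.range (mapDomain f) ↔ ↑x.coeff.support ⊆ Set.range f := by
  classical
  refine ⟨?_, fun h ↦ ⟨comapDomain f hf x, mapDomain_comapDomain h hf⟩⟩
  rintro ⟨y, rfl⟩
  exact (Finset.coe_subset.mpr Finsupp.mapDomain_support).trans (by simp)

namespace LaurentPolynomial

variable {R : Type*} [CommRing R]

def monomialExponents (A : Subalgebra R R[T;T⁻¹]) : AddSubmonoid ℤ where
  carrier := {m | T m ∈ A}
  zero_mem' := by
    show T 0 ∈ A
    rw [T_zero]
    exact A.one_mem
  add_mem' {m n} hm hn := by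
    show T (m + n) ∈ A
    rw [T_add]
    exact A.mul_mem hm hn

theorem mem_of_support_subset_monomialExponents {A : Subalgebra R R[T;T⁻¹]} {p : R[T;T⁻¹]}
    (hp : ↑p.coeff.support ⊆ (monomialExponents A : Set ℤ)) : p ∈ A := by
  rw [← p.sum_coeff_single, Finsupp.sum]
  refine A.sum_mem fun m hm ↦ ?_
  rw [single_eq_C_mul_T, C_eq_algebraMap]
  exact A.mul_mem (A.algebraMap_mem _) (hp hm)

end LaurentPolynomial

theorem IsGradedLaurentSubalgebra.mem_monomialExponents {k : Type*} [Field k]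
    {A : Subalgebra k k[T;T⁻¹]} (hA : IsGradedLaurentSubalgebra k A) {p : k[T;T⁻¹]} (hp : p ∈ A)
    {m : ℤ} (hm : AddMonoidAlgebra.coeff p m ≠ 0) : m ∈ monomialExponents A := by
  have h := A.mul_mem (A.algebraMap_mem (AddMonoidAlgebra.coeff p m)⁻¹) (hA p hp m)
  rwa [← C_eq_algebraMap, ← mul_assoc, ← map_mul, inv_mul_cancel₀ hm, map_one, one_mul] at h

theorem IsGradedLaurentSubalgebra.mem_iff_support_subset {k : Type*} [Field k]
    {A : Subalgebra k k[T;T⁻¹]} (hA : IsGradedLaurentSubalgebra k A) (p : k[T;T⁻¹]) :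
    p ∈ A ↔ ↑p.coeff.support ⊆ (monomialExponents A : Set ℤ) :=
  ⟨fun hp _ hm ↦ hA.mem_monomialExponents hp (Finsupp.mem_support_iff.mp hm),
    mem_of_support_subset_monomialExponents⟩

/-- A graded `k`-subalgebra of `k[t, t⁻¹]` containing an element of positive degree
and an element of negative degree is a principal ideal domain. -/
theorem statement1 (k : Type*) [Field k] (A : Subalgebra k (LaurentPolynomial k))
    (hA : IsGradedLaurentSubalgebra k A)
    (hpos : ∃ f ∈ A, ∃ m : ℤ, 0 < m ∧ AddMonoidAlgebra.coeff f m ≠ 0)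
    (hneg : ∃ f ∈ A, ∃ m : ℤ, m < 0 ∧ AddMonoidAlgebra.coeff f m ≠ 0) :
    IsPrincipalIdealRing A := by
  obtain ⟨f, hf, a, ha, hfa⟩ := hpos
  obtain ⟨e, he, b, hb, heb⟩ := hneg
  obtain ⟨g, hg, hS⟩ := (monomialExponents A).exists_eq_range_mul_of_pos_mem_of_neg_mem ha hb
    (hA.mem_monomialExponents hf hfa) (hA.mem_monomialExponents he heb)
  let φ := AddMonoidAlgebra.mapDomainAlgHom k k (AddMonoidHom.mulLeft g)
  have hφ : φ.range = A := by
    ext p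
    rw [hA.mem_iff_support_subset, hS, AlgHom.mem_range, ← Set.mem_range,
      ← AddMonoidAlgebra.mem_range_mapDomain_iff (mul_right_injective₀ hg)]
    rfl
  exact hφ ▸ IsPrincipalIdealRing.of_surjective φ.rangeRestrict φ.rangeRestrict_surjective
end

section
/- Let $R$ be a commutative ring, $P$ a finitely generated projective $R$-module of rank $r \geq 2$, and $I$ an ideal of $R$. Let $\overline{R} = R/\mathrm{Nil}(R)$, $\overline{P} = P/\mathrm{Nil}(R)P$, $\overline{I} = I \cdot \overline{R}$. Then $\mathrm{Um}(R \oplus P, I) = e_1 \cdot \mathrm{ET}(R \oplus P, I)$ if and only if $\mathrm{Um}(\overline{R} \oplus \overline{P}, \overline{I}) = e_1 \cdot \mathrm{ET}(\overline{R} \oplus \overline{P}, \overline{I})$. -/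
/-!
Reduction modulo an ideal `J` of `R` sends every linear endomorphism of `R ⊕ P` to one of
`R̄ ⊕ P̄`, and since `P` is projective, vectors, functionals and their relative versions in `I·P`,
`I·P*` all lift; so `ET(R ⊕ P, I)` maps onto `ET(R̄ ⊕ P̄, Ī)`. A unimodular functional also lifts,
to one whose value is `1` modulo `J`, hence a unit once `J` lies in the Jacobson radical (as the
nilradical does). This gives the forward direction.

Conversely, lifting an element of `ET(R̄ ⊕ P̄, Ī)` that moves the reduction of `(a, p)` to `(1, 0)`
brings `(a, p)` to some `(a', p')` with `a' ∈ 1 + I ∩ J` and `p' ∈ I·P`. Then `a'` is a unit, a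
transvection clears `p'`, and it remains to move `(1 + c, 0)` to `(1, 0)` for `c ∈ I ∩ J`. As `P`
has nonzero rank, Nakayama's lemma shows that its trace ideal is `R`; writing `1 = ∑ φᵢ(wᵢ)`, each
term `c φᵢ(wᵢ)` is removed from the first coordinate by conjugating a relative transvection
`(a, p) ↦ (a + ψ p, p)` by `(a, p) ↦ (a, p + a wᵢ)`.
-/

open scoped TensorProduct

set_option synthInstance.maxHeartbeats 1000000
set_option maxHeartbeats 2000000


/-- A module has (constant local) rank `r` if its localization at every prime has rank `r`. -/
def HasRank (A : Type*) [CommRing A] (P : Type*) [AddCommGroup P] [Module A P] (r : ℕ) : Prop :=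
  ∀ (p : Ideal A) (hp : p.IsPrime),
    letI := hp
    Module.rank (Localization.AtPrime p) (LocalizedModule p.primeCompl P) = r

/-- The group of elementary transvections `ET(A ⊕ P)`, as a submonoid of the linear
endomorphisms of `A × P` (closed under inverses, since the inverse of a transvection
is a transvection). -/
def ETGroup (A : Type*) [CommRing A] (P : Type*) [AddCommGroup P] [Module A P] :
    Submonoid ((A × P) →ₗ[A] (A × P)) :=
  Submonoid.closure {f | (∃ q : P, ∀ x : A × P, f x = (x.1, x.2 + x.1 • q)) ∨
       (∃ ψ : P →ₗ[A] A, ∀ x : A × P, f x = (x.1 + ψ x.2, x.2))}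

/-- The relative group `ET(A ⊕ P, I)` : the normal closure in `ET(A ⊕ P)` of the subgroup
generated by transvections with `q ∈ IP`, `ψ ∈ I·P*`. -/
def ETGroupRel (A : Type*) [CommRing A] (P : Type*) [AddCommGroup P] [Module A P]
    (I : Ideal A) : Submonoid ((A × P) →ₗ[A] (A × P)) :=
  Submonoid.closure {f | ∃ g h e : (A × P) →ₗ[A] (A × P),
    g ∈ ETGroup A P ∧ h ∈ ETGroup A P ∧ g * h = 1 ∧ h * g = 1 ∧
    e ∈ Submonoid.closure
      {f' | (∃ q ∈ (I • ⊤ : Submodule A P), ∀ x : A × P, f' x = (x.1, x.2 + x.1 • q)) ∨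
            (∃ ψ ∈ (I • ⊤ : Submodule A (P →ₗ[A] A)), ∀ x : A × P, f' x = (x.1 + ψ x.2, x.2))} ∧
    f = g * e * h}

/-- `Um(A ⊕ P, I) = (1,0) · ET(A ⊕ P, I)` : every unimodular element of `A ⊕ P` congruent to
`(1, 0)` modulo `I` can be moved to `(1, 0)` by a relative elementary transvection. -/
def UmTransitive (A : Type*) [CommRing A] (P : Type*) [AddCommGroup P] [Module A P]
    (I : Ideal A) : Prop :=
  ∀ a : A, ∀ p : P, (∃ φ : (A × P) →ₗ[A] A, φ (a, p) = 1) →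
    a - 1 ∈ I → p ∈ (I • ⊤ : Submodule A P) →
    ∃ τ ∈ ETGroupRel A P I, τ (a, p) = ((1 : A), (0 : P))

theorem Submonoid.exists_mem_of_mem_closure_of_rel {M N : Type*} [Monoid M] [Monoid N]
    {rel : M → N → Prop} (one : rel 1 1)
    (mul : ∀ {a b : M} {c d : N}, rel a c → rel b d → rel (a * b) (c * d))
    {S : Set M} {T : Submonoid N} (hS : ∀ s ∈ S, ∃ t ∈ T, rel s t)
    {x : M} (hx : x ∈ Submonoid.closure S) : ∃ y ∈ T, rel x y := by
  induction hx using Submonoid.closure_induction with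
  | mem s hs => exact hS s hs
  | one => exact ⟨1, T.one_mem, one⟩
  | mul a b _ _ iha ihb =>
    obtain ⟨c, hc, hac⟩ := iha
    obtain ⟨d, hd, hbd⟩ := ihb
    exact ⟨c * d, T.mul_mem hc hd, mul hac hbd⟩

section Transvection

variable {R : Type*} [CommRing R] {P : Type*} [AddCommGroup P] [Module R P]

def transvecP (q : P) : Module.End R (R × P) :=
  (LinearMap.fst R R P).prod (LinearMap.snd R R P + (LinearMap.fst R R P).smulRight q)

def transvecR (ψ : P →ₗ[R] R) : Module.End R (R × P) :=
  (LinearMap.fst R R P + ψ ∘ₗ LinearMap.snd R R P).prod (LinearMap.snd R R P)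

@[simp] theorem transvecP_apply (q : P) (x : R × P) : transvecP q x = (x.1, x.2 + x.1 • q) := rfl

@[simp] theorem transvecR_apply (ψ : P →ₗ[R] R) (x : R × P) :
    transvecR ψ x = (x.1 + ψ x.2, x.2) := rfl

theorem transvecP_mul (q q' : P) :
    transvecP (R := R) q * transvecP q' = transvecP (q + q') := by
  ext x <;> simp [smul_add, add_comm q]

theorem transvecR_mul (ψ ψ' : P →ₗ[R] R) : transvecR ψ * transvecR ψ' = transvecR (ψ + ψ') := by
  ext x <;> simp [add_comm (ψ' _)]

@[simp] theorem transvecP_zero : transvecP (R := R) (0 : P) = 1 := by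
  ext x <;> simp

@[simp] theorem transvecR_zero : transvecR (0 : P →ₗ[R] R) = 1 := by
  ext x <;> simp

theorem ETGroup_eq_closure :
    ETGroup R P = Submonoid.closure (Set.range transvecP ∪ Set.range transvecR) := by
  simp only [ETGroup, Set.range, LinearMap.ext_iff, transvecP_apply, transvecR_apply, eq_comm]
  rfl

theorem transvecP_mem_ETGroup (q : P) : transvecP q ∈ ETGroup R P :=
  Submonoid.subset_closure (Or.inl ⟨q, fun _ => rfl⟩)

theorem transvecR_mem_ETGroup (ψ : P →ₗ[R] R) : transvecR ψ ∈ ETGroup R P :=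
  Submonoid.subset_closure (Or.inr ⟨ψ, fun _ => rfl⟩)

theorem exists_mul_eq_one_of_mem_ETGroup {g : Module.End R (R × P)} (hg : g ∈ ETGroup R P) :
    ∃ h ∈ ETGroup R P, g * h = 1 ∧ h * g = 1 := by
  rw [ETGroup_eq_closure] at hg
  induction hg using Submonoid.closure_induction with
  | mem s hs =>
    rcases hs with ⟨q, rfl⟩ | ⟨ψ, rfl⟩
    · exact ⟨transvecP (-q), transvecP_mem_ETGroup _, by simp [transvecP_mul]⟩
    · exact ⟨transvecR (-ψ), transvecR_mem_ETGroup _, by simp [transvecR_mul]⟩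
  | one => exact ⟨1, one_mem _, mul_one 1, mul_one 1⟩
  | mul a b _ _ iha ihb =>
    obtain ⟨a', ha', haa', ha'a⟩ := iha
    obtain ⟨b', hb', hbb', hb'b⟩ := ihb
    refine ⟨b' * a', mul_mem hb' ha', ?_, ?_⟩
    · rw [mul_assoc, ← mul_assoc b, hbb', one_mul, haa']
    · rw [mul_assoc, ← mul_assoc a', ha'a, one_mul, hb'b]

def ETGroupRelBase (R : Type*) [CommRing R] (P : Type*) [AddCommGroup P] [Module R P]
    (I : Ideal R) : Submonoid (Module.End R (R × P)) :=
  Submonoid.closure (transvecP '' (I • ⊤ : Submodule R P) ∪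
    transvecR '' (I • ⊤ : Submodule R (P →ₗ[R] R)))

theorem ETGroupRel_eq (I : Ideal R) : ETGroupRel R P I = Submonoid.closure
    {f | ∃ g h e, g ∈ ETGroup R P ∧ h ∈ ETGroup R P ∧ g * h = 1 ∧ h * g = 1 ∧
      e ∈ ETGroupRelBase R P I ∧ f = g * e * h} := by
  simp only [ETGroupRel, ETGroupRelBase, Set.image, SetLike.mem_coe, LinearMap.ext_iff,
    transvecP_apply, transvecR_apply, @eq_comm (R × P)]
  rfl

theorem transvecP_mem_ETGroupRelBase {I : Ideal R} {q : P} (hq : q ∈ (I • ⊤ : Submodule R P)) :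
    transvecP q ∈ ETGroupRelBase R P I :=
  Submonoid.subset_closure (Or.inl ⟨q, hq, rfl⟩)

theorem transvecR_mem_ETGroupRelBase {I : Ideal R} {ψ : P →ₗ[R] R}
    (hψ : ψ ∈ (I • ⊤ : Submodule R (P →ₗ[R] R))) : transvecR ψ ∈ ETGroupRelBase R P I :=
  Submonoid.subset_closure (Or.inr ⟨ψ, hψ, rfl⟩)

theorem conj_mem_ETGroupRel {I : Ideal R} {g h e : Module.End R (R × P)} (hg : g ∈ ETGroup R P)
    (hh : h ∈ ETGroup R P) (hgh : g * h = 1) (hhg : h * g = 1) (he : e ∈ ETGroupRelBase R P I) :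
    g * e * h ∈ ETGroupRel R P I := by
  rw [ETGroupRel_eq]
  exact Submonoid.subset_closure ⟨g, h, e, hg, hh, hgh, hhg, he, rfl⟩

theorem ETGroupRelBase_le (I : Ideal R) : ETGroupRelBase R P I ≤ ETGroupRel R P I := fun e he => by
  simpa using conj_mem_ETGroupRel (one_mem _) (one_mem _) (mul_one 1) (mul_one 1) he

theorem ETGroupRel_bot : ETGroupRel R P ⊥ = ⊥ := by
  have hbase : ETGroupRelBase R P ⊥ = ⊥ := by
    simp [ETGroupRelBase, Submodule.bot_smul, Set.image_singleton, Submonoid.closure_singleton_one]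
  rw [ETGroupRel_eq, eq_bot_iff, Submonoid.closure_le]
  rintro _ ⟨g, h, e, -, -, hgh, -, he, rfl⟩
  rw [hbase, Submonoid.mem_bot] at he
  simp [he, hgh]

end Transvection

section Reduction

variable {R : Type*} [CommRing R] {P : Type*} [AddCommGroup P] [Module R P] (J : Ideal R)

def reduceMod : (R × P) →ₗ[R] (R ⧸ J) × (P ⧸ (J • ⊤ : Submodule R P)) :=
  (Algebra.linearMap R (R ⧸ J)).prodMap (J • ⊤ : Submodule R P).mkQ

@[simp] theorem reduceMod_apply (x : R × P) :
    reduceMod J x = (Ideal.Quotient.mk J x.1, Submodule.Quotient.mk x.2) := rfl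

theorem reduceMod_surjective : Function.Surjective (reduceMod (P := P) J) :=
  Function.Surjective.prodMap Ideal.Quotient.mk_surjective (Submodule.mkQ_surjective _)

def Covers (σ : Module.End R (R × P))
    (σ' : Module.End (R ⧸ J) ((R ⧸ J) × (P ⧸ (J • ⊤ : Submodule R P)))) : Prop :=
  ∀ x, σ' (reduceMod J x) = reduceMod J (σ x)

variable {J}

theorem covers_one : Covers J (1 : Module.End R (R × P)) 1 := fun _ => rfl

theorem Covers.mul {σ τ : Module.End R (R × P)}
    {σ' τ' : Module.End (R ⧸ J) ((R ⧸ J) × (P ⧸ (J • ⊤ : Submodule R P)))}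
    (hσ : Covers J σ σ') (hτ : Covers J τ τ') : Covers J (σ * τ) (σ' * τ') := fun x => by
  simp only [Module.End.mul_apply, hτ x, hσ (τ x)]

theorem Covers.unique {σ : Module.End R (R × P)}
    {σ' σ'' : Module.End (R ⧸ J) ((R ⧸ J) × (P ⧸ (J • ⊤ : Submodule R P)))}
    (h' : Covers J σ σ') (h'' : Covers J σ σ'') : σ' = σ'' :=
  LinearMap.ext <| (reduceMod_surjective J).forall.2 fun x => (h' x).trans (h'' x).symm

theorem Covers.of_mul_eq_one {g h : Module.End R (R × P)}
    {g' h' : Module.End (R ⧸ J) ((R ⧸ J) × (P ⧸ (J • ⊤ : Submodule R P)))}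
    (hg : Covers J g g') (hgh : g * h = 1) (hhg' : h' * g' = 1) : Covers J h h' := fun x => by
  calc h' (reduceMod J x) = h' (reduceMod J (g (h x))) := by
        rw [← Module.End.mul_apply g, hgh, Module.End.one_apply]
    _ = reduceMod J (h x) := by rw [← hg, ← Module.End.mul_apply, hhg', Module.End.one_apply]

theorem covers_transvecP (q : P) :
    Covers J (transvecP q) (transvecP (Submodule.Quotient.mk q)) := fun x => by
  simp [Submodule.Quotient.mk_smul]

theorem covers_transvecR {ψ : P →ₗ[R] R}
    {ψ' : (P ⧸ (J • ⊤ : Submodule R P)) →ₗ[R ⧸ J] R ⧸ J}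
    (hψ : ∀ p, ψ' (Submodule.Quotient.mk p) = Ideal.Quotient.mk J (ψ p)) :
    Covers J (transvecR ψ) (transvecR ψ') := fun x => by
  simp [hψ]

variable (J) in
def dualReduceMod (ψ : P →ₗ[R] R) : (P ⧸ (J • ⊤ : Submodule R P)) →ₗ[R ⧸ J] R ⧸ J :=
  ((J • ⊤ : Submodule R P).liftQ (Algebra.linearMap R (R ⧸ J) ∘ₗ ψ) <| by
    rw [Submodule.smul_le]
    intro r hr p _
    simp [Algebra.smul_def, Ideal.Quotient.eq_zero_iff_mem.2 hr])
  |>.extendScalarsOfSurjective Ideal.Quotient.mk_surjective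

@[simp] theorem dualReduceMod_mk (ψ : P →ₗ[R] R) (p : P) :
    dualReduceMod J ψ (Submodule.Quotient.mk p) = Ideal.Quotient.mk J (ψ p) := rfl

theorem exists_dual_lift [Module.Projective R P]
    (ψ' : (P ⧸ (J • ⊤ : Submodule R P)) →ₗ[R ⧸ J] R ⧸ J) :
    ∃ ψ : P →ₗ[R] R, ∀ p, ψ' (Submodule.Quotient.mk p) = Ideal.Quotient.mk J (ψ p) := by
  obtain ⟨ψ, hψ⟩ := Module.projective_lifting_property (Algebra.linearMap R (R ⧸ J))
    (ψ'.restrictScalars R ∘ₗ (J • ⊤ : Submodule R P).mkQ) Ideal.Quotient.mk_surjective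
  exact ⟨ψ, fun p => (LinearMap.congr_fun hψ p).symm⟩

variable (J) in
theorem exists_dual_prod_reduceMod (φ : (R × P) →ₗ[R] R) :
    ∃ φ' : (R ⧸ J) × (P ⧸ (J • ⊤ : Submodule R P)) →ₗ[R ⧸ J] R ⧸ J,
      ∀ x, φ' (reduceMod J x) = Ideal.Quotient.mk J (φ x) := by
  refine ⟨(LinearMap.toSpanSingleton _ _ (Ideal.Quotient.mk J (φ (1, 0)))).coprod
    (dualReduceMod J (φ ∘ₗ LinearMap.inr R R P)), fun x => ?_⟩
  have hx : x = x.1 • ((1 : R), (0 : P)) + ((0 : R), x.2) := by ext <;> simp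
  conv_rhs => rw [hx, map_add, map_smul]
  simp

theorem exists_dual_prod_lift [Module.Projective R P]
    (φ' : (R ⧸ J) × (P ⧸ (J • ⊤ : Submodule R P)) →ₗ[R ⧸ J] R ⧸ J) :
    ∃ φ : (R × P) →ₗ[R] R, ∀ x, φ' (reduceMod J x) = Ideal.Quotient.mk J (φ x) := by
  obtain ⟨φ, hφ⟩ := Module.projective_lifting_property (Algebra.linearMap R (R ⧸ J))
    (φ'.restrictScalars R ∘ₗ reduceMod J) Ideal.Quotient.mk_surjective
  exact ⟨φ, fun x => (LinearMap.congr_fun hφ x).symm⟩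

variable (J) in
theorem mk_mem_map_smul_top {I : Ideal R} {q : P} (hq : q ∈ (I • ⊤ : Submodule R P)) :
    (Submodule.Quotient.mk q : P ⧸ (J • ⊤ : Submodule R P)) ∈
      (I.map (Ideal.Quotient.mk J) • ⊤ : Submodule (R ⧸ J) (P ⧸ (J • ⊤ : Submodule R P))) := by
  induction hq using Submodule.smul_induction_on' with
  | smul r hr n _ =>
    show Ideal.Quotient.mk J r • Submodule.Quotient.mk n ∈ _
    exact Submodule.smul_mem_smul (Ideal.mem_map_of_mem _ hr) Submodule.mem_top
  | add a _ b _ ha hb => exact Submodule.add_mem _ ha hb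

theorem exists_mem_smul_top_mk_eq {I : Ideal R} {q' : P ⧸ (J • ⊤ : Submodule R P)}
    (hq' : q' ∈ (I.map (Ideal.Quotient.mk J) • ⊤ :
      Submodule (R ⧸ J) (P ⧸ (J • ⊤ : Submodule R P)))) :
    ∃ q ∈ (I • ⊤ : Submodule R P), Submodule.Quotient.mk q = q' := by
  refine Submodule.smul_induction_on hq' (fun r' hr' n' _ => ?_) (fun a b ha hb => ?_)
  · obtain ⟨r, hr, rfl⟩ := (Ideal.mem_map_iff_of_surjective _ Ideal.Quotient.mk_surjective).1 hr'
    obtain ⟨n, rfl⟩ := Submodule.Quotient.mk_surjective _ n'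
    exact ⟨r • n, Submodule.smul_mem_smul hr Submodule.mem_top, rfl⟩
  · obtain ⟨p, hp, rfl⟩ := ha
    obtain ⟨p', hp', rfl⟩ := hb
    exact ⟨p + p', Submodule.add_mem _ hp hp', rfl⟩

variable (J) in
theorem exists_dual_reduceMod_mem {I : Ideal R} {ψ : P →ₗ[R] R}
    (hψ : ψ ∈ (I • ⊤ : Submodule R (P →ₗ[R] R))) :
    ∃ ψ' ∈ (I.map (Ideal.Quotient.mk J) • ⊤ :
        Submodule (R ⧸ J) ((P ⧸ (J • ⊤ : Submodule R P)) →ₗ[R ⧸ J] R ⧸ J)),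
      ∀ p, ψ' (Submodule.Quotient.mk p) = Ideal.Quotient.mk J (ψ p) := by
  refine Submodule.smul_induction_on hψ (fun r hr f _ => ?_) (fun a b ha hb => ?_)
  · exact ⟨Ideal.Quotient.mk J r • dualReduceMod J f,
      Submodule.smul_mem_smul (Ideal.mem_map_of_mem _ hr) Submodule.mem_top, fun p => by simp⟩
  · obtain ⟨f, hf, hfp⟩ := ha
    obtain ⟨g, hg, hgp⟩ := hb
    exact ⟨f + g, Submodule.add_mem _ hf hg, fun p => by simp [hfp, hgp]⟩

theorem exists_dual_lift_mem [Module.Projective R P] {I : Ideal R}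
    {ψ' : (P ⧸ (J • ⊤ : Submodule R P)) →ₗ[R ⧸ J] R ⧸ J}
    (hψ' : ψ' ∈ (I.map (Ideal.Quotient.mk J) • ⊤ :
        Submodule (R ⧸ J) ((P ⧸ (J • ⊤ : Submodule R P)) →ₗ[R ⧸ J] R ⧸ J))) :
    ∃ ψ ∈ (I • ⊤ : Submodule R (P →ₗ[R] R)),
      ∀ p, ψ' (Submodule.Quotient.mk p) = Ideal.Quotient.mk J (ψ p) := by
  refine Submodule.smul_induction_on hψ' (fun r' hr' f' _ => ?_) (fun a b ha hb => ?_)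
  · obtain ⟨r, hr, rfl⟩ := (Ideal.mem_map_iff_of_surjective _ Ideal.Quotient.mk_surjective).1 hr'
    obtain ⟨f, hf⟩ := exists_dual_lift f'
    exact ⟨r • f, Submodule.smul_mem_smul hr Submodule.mem_top, fun p => by simp [hf]⟩
  · obtain ⟨f, hf, hfp⟩ := ha
    obtain ⟨g, hg, hgp⟩ := hb
    exact ⟨f + g, Submodule.add_mem _ hf hg, fun p => by simp [hfp, hgp]⟩

variable (J) in
theorem exists_covers_of_mem_ETGroup {σ : Module.End R (R × P)} (hσ : σ ∈ ETGroup R P) :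
    ∃ σ' ∈ ETGroup (R ⧸ J) (P ⧸ (J • ⊤ : Submodule R P)), Covers J σ σ' := by
  rw [ETGroup_eq_closure] at hσ
  refine Submonoid.exists_mem_of_mem_closure_of_rel covers_one Covers.mul ?_ hσ
  rintro _ (⟨q, rfl⟩ | ⟨ψ, rfl⟩)
  · exact ⟨_, transvecP_mem_ETGroup _, covers_transvecP q⟩
  · exact ⟨_, transvecR_mem_ETGroup _, covers_transvecR (dualReduceMod_mk ψ)⟩

theorem exists_covered_of_mem_ETGroup [Module.Projective R P]
    {σ' : Module.End (R ⧸ J) ((R ⧸ J) × (P ⧸ (J • ⊤ : Submodule R P)))}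
    (hσ' : σ' ∈ ETGroup (R ⧸ J) (P ⧸ (J • ⊤ : Submodule R P))) :
    ∃ σ ∈ ETGroup R P, Covers J σ σ' := by
  rw [ETGroup_eq_closure] at hσ'
  refine Submonoid.exists_mem_of_mem_closure_of_rel (rel := fun σ' σ => Covers J σ σ')
    covers_one (fun h h' => Covers.mul h h') ?_ hσ'
  rintro _ (⟨q', rfl⟩ | ⟨ψ', rfl⟩)
  · obtain ⟨q, rfl⟩ := Submodule.Quotient.mk_surjective _ q'
    exact ⟨_, transvecP_mem_ETGroup q, covers_transvecP q⟩
  · obtain ⟨ψ, hψ⟩ := exists_dual_lift ψ'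
    exact ⟨_, transvecR_mem_ETGroup ψ, covers_transvecR hψ⟩

variable (J) in
theorem exists_covers_of_mem_ETGroupRelBase {I : Ideal R} {σ : Module.End R (R × P)}
    (hσ : σ ∈ ETGroupRelBase R P I) :
    ∃ σ' ∈ ETGroupRelBase (R ⧸ J) (P ⧸ (J • ⊤ : Submodule R P)) (I.map (Ideal.Quotient.mk J)),
      Covers J σ σ' := by
  refine Submonoid.exists_mem_of_mem_closure_of_rel covers_one Covers.mul ?_ hσ
  rintro _ (⟨q, hq, rfl⟩ | ⟨ψ, hψ, rfl⟩)
  · exact ⟨_, transvecP_mem_ETGroupRelBase (mk_mem_map_smul_top J hq), covers_transvecP q⟩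
  · obtain ⟨ψ', hψ', hψψ'⟩ := exists_dual_reduceMod_mem J hψ
    exact ⟨_, transvecR_mem_ETGroupRelBase hψ', covers_transvecR hψψ'⟩

theorem exists_covered_of_mem_ETGroupRelBase [Module.Projective R P] {I : Ideal R}
    {σ' : Module.End (R ⧸ J) ((R ⧸ J) × (P ⧸ (J • ⊤ : Submodule R P)))}
    (hσ' : σ' ∈ ETGroupRelBase (R ⧸ J) (P ⧸ (J • ⊤ : Submodule R P))
      (I.map (Ideal.Quotient.mk J))) :
    ∃ σ ∈ ETGroupRelBase R P I, Covers J σ σ' := by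
  refine Submonoid.exists_mem_of_mem_closure_of_rel (rel := fun σ' σ => Covers J σ σ')
    covers_one (fun h h' => Covers.mul h h') ?_ hσ'
  rintro _ (⟨q', hq', rfl⟩ | ⟨ψ', hψ', rfl⟩)
  · obtain ⟨q, hq, rfl⟩ := exists_mem_smul_top_mk_eq hq'
    exact ⟨_, transvecP_mem_ETGroupRelBase hq, covers_transvecP q⟩
  · obtain ⟨ψ, hψ, hψψ'⟩ := exists_dual_lift_mem hψ'
    exact ⟨_, transvecR_mem_ETGroupRelBase hψ, covers_transvecR hψψ'⟩

variable (J) in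
theorem exists_covers_of_mem_ETGroupRel {I : Ideal R} {τ : Module.End R (R × P)}
    (hτ : τ ∈ ETGroupRel R P I) :
    ∃ τ' ∈ ETGroupRel (R ⧸ J) (P ⧸ (J • ⊤ : Submodule R P)) (I.map (Ideal.Quotient.mk J)),
      Covers J τ τ' := by
  rw [ETGroupRel_eq] at hτ
  refine Submonoid.exists_mem_of_mem_closure_of_rel covers_one Covers.mul ?_ hτ
  rintro _ ⟨g, h, e, hg, hh, hgh, hhg, he, rfl⟩
  obtain ⟨g', hg', hgg'⟩ := exists_covers_of_mem_ETGroup J hg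
  obtain ⟨h', hh', hhh'⟩ := exists_covers_of_mem_ETGroup J hh
  obtain ⟨e', he', hee'⟩ := exists_covers_of_mem_ETGroupRelBase J he
  refine ⟨g' * e' * h', conj_mem_ETGroupRel hg' hh' ?_ ?_ he', (hgg'.mul hee').mul hhh'⟩
  · exact (hgg'.mul hhh').unique (hgh ▸ covers_one)
  · exact (hhh'.mul hgg').unique (hhg ▸ covers_one)

theorem exists_covered_of_mem_ETGroupRel [Module.Projective R P] {I : Ideal R}
    {τ' : Module.End (R ⧸ J) ((R ⧸ J) × (P ⧸ (J • ⊤ : Submodule R P)))}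
    (hτ' : τ' ∈ ETGroupRel (R ⧸ J) (P ⧸ (J • ⊤ : Submodule R P))
      (I.map (Ideal.Quotient.mk J))) :
    ∃ τ ∈ ETGroupRel R P I, Covers J τ τ' := by
  rw [ETGroupRel_eq] at hτ'
  refine Submonoid.exists_mem_of_mem_closure_of_rel (rel := fun τ' τ => Covers J τ τ')
    covers_one (fun h h' => Covers.mul h h') ?_ hτ'
  rintro _ ⟨g', h', e', hg', -, -, hhg', he', rfl⟩
  obtain ⟨g, hg, hgg'⟩ := exists_covered_of_mem_ETGroup hg'
  obtain ⟨h, hh, hgh, hhg⟩ := exists_mul_eq_one_of_mem_ETGroup hg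
  obtain ⟨e, he, hee'⟩ := exists_covered_of_mem_ETGroupRelBase he'
  exact ⟨g * e * h, conj_mem_ETGroupRel hg hh hgh hhg he,
    (hgg'.mul hee').mul (hgg'.of_mul_eq_one hgh hhg')⟩

theorem sub_mem_of_mem_ETGroupRel {I : Ideal R} {τ : Module.End R (R × P)}
    (hτ : τ ∈ ETGroupRel R P I) (x : R × P) :
    (τ x).1 - x.1 ∈ I ∧ (τ x).2 - x.2 ∈ (I • ⊤ : Submodule R P) := by
  -- reduce modulo `I` itself, where the relative group is trivial
  obtain ⟨τ', hτ', hττ'⟩ := exists_covers_of_mem_ETGroupRel I hτ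
  rw [Ideal.map_quotient_self, ETGroupRel_bot, Submonoid.mem_bot] at hτ'
  have := hττ' x
  simp only [hτ', Module.End.one_apply, reduceMod_apply, Prod.mk.injEq] at this
  exact ⟨Ideal.Quotient.eq.1 this.1.symm, (Submodule.Quotient.eq _).1 this.2.symm⟩

end Reduction

section Trace

variable {R : Type*} [CommRing R] {P : Type*} [AddCommGroup P] [Module R P]

variable (R P) in
def traceIdeal : Ideal R := ⨆ φ : P →ₗ[R] R, LinearMap.range φ

theorem top_le_traceIdeal_smul_top [Module.Projective R P] :
    (⊤ : Submodule R P) ≤ traceIdeal R P • ⊤ := by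
  obtain ⟨s, hs⟩ := Module.projective_def.mp (inferInstance : Module.Projective R P)
  intro x _
  rw [← hs x, Finsupp.linearCombination_apply, Finsupp.sum]
  refine Submodule.sum_mem _ fun c _ => Submodule.smul_mem_smul ?_ Submodule.mem_top
  exact Submodule.mem_iSup_of_mem (Finsupp.lapply c ∘ₗ s) ⟨x, rfl⟩

theorem HasRank.eq_top_of_top_le_smul_top [Module.Finite R P] {r : ℕ} (hrk : HasRank R P r)
    (hr : r ≠ 0) {T : Ideal R} (hT : (⊤ : Submodule R P) ≤ T • ⊤) : T = ⊤ := by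
  by_contra hne
  obtain ⟨m, hm, hTm⟩ := Ideal.exists_le_maximal T hne
  obtain ⟨c, hc1, hc⟩ := Submodule.exists_sub_one_mem_and_smul_eq_zero_of_fg_of_le_smul m ⊤
    Module.Finite.fg_top (hT.trans (Submodule.smul_mono_left hTm))
  have hcm : c ∉ m := fun hcm => hm.ne_top <| (Ideal.eq_top_iff_one m).2 <| by
    simpa using m.sub_mem hcm hc1
  have : Subsingleton (LocalizedModule m.primeCompl P) :=
    LocalizedModule.subsingleton_iff.2 fun p => ⟨c, hcm, hc p Submodule.mem_top⟩
  have h0 := hrk m hm.isPrime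
  rw [rank_subsingleton'] at h0
  exact hr (by exact_mod_cast h0.symm)

theorem HasRank.traceIdeal_eq_top [Module.Finite R P] [Module.Projective R P] {r : ℕ}
    (hrk : HasRank R P r) (hr : r ≠ 0) : traceIdeal R P = ⊤ :=
  hrk.eq_top_of_top_le_smul_top hr top_le_traceIdeal_smul_top

end Trace

section Endgame

variable {R : Type*} [CommRing R] {P : Type*} [AddCommGroup P] [Module R P] {I : Ideal R}

theorem IsUnit.add_of_mem_jacobson_bot {u c : R} (hu : IsUnit u)
    (hc : c ∈ Ideal.jacobson (⊥ : Ideal R)) : IsUnit (u + c) := by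
  obtain ⟨u, rfl⟩ := hu
  have h := Ideal.mem_jacobson_bot.1 hc ↑u⁻¹
  convert u.isUnit.mul h using 1
  rw [mul_add, mul_one, mul_left_comm, Units.mul_inv, mul_one, add_comm]

/-- Conjugating the transvection `transvecR ((c * u⁻¹) • φ)` by `transvecP w` turns `(u, 0)` into
`(u - c * φ w, -(c * φ w) • w)`; a last relative `transvecP` clears the second coordinate. -/
theorem exists_mem_ETGroupRel_apply_sub_mul {c : R} (hc : c ∈ I) (φ : P →ₗ[R] R) (w : P)
    {u : R} (hu : IsUnit u) (hv : IsUnit (u - c * φ w)) :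
    ∃ σ ∈ ETGroupRel R P I, σ (u, 0) = (u - c * φ w, 0) := by
  obtain ⟨u, rfl⟩ := hu
  obtain ⟨v, hv⟩ := hv
  have hψ : (c * ↑u⁻¹) • φ ∈ (I • ⊤ : Submodule R (P →ₗ[R] R)) :=
    Submodule.smul_mem_smul (I.mul_mem_right _ hc) Submodule.mem_top
  have hq : (↑v⁻¹ * c * φ w) • w ∈ (I • ⊤ : Submodule R P) :=
    Submodule.smul_mem_smul (I.mul_mem_right _ (I.mul_mem_left _ hc)) Submodule.mem_top
  refine ⟨transvecP ((↑v⁻¹ * c * φ w) • w) * (transvecP w * transvecR ((c * ↑u⁻¹) • φ) *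
      transvecP (-w)), mul_mem (ETGroupRelBase_le I (transvecP_mem_ETGroupRelBase hq))
      (conj_mem_ETGroupRel (transvecP_mem_ETGroup w) (transvecP_mem_ETGroup (-w))
        (by simp [transvecP_mul]) (by simp [transvecP_mul]) (transvecR_mem_ETGroupRelBase hψ)), ?_⟩
  have hvv : (↑v : R) * ↑v⁻¹ = 1 := v.mul_inv
  have huu : (↑u : R) * ↑u⁻¹ = 1 := u.mul_inv
  rw [hv] at hvv
  ext
  · simp only [Module.End.mul_apply, transvecP_apply, transvecR_apply, LinearMap.smul_apply,
      map_smul, map_neg, smul_eq_mul, zero_add]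
    linear_combination (-(c * φ w)) * huu
  · simp only [Module.End.mul_apply, transvecP_apply, transvecR_apply, LinearMap.smul_apply,
      map_smul, map_neg, smul_eq_mul, zero_add]
    match_scalars
    linear_combination (c * φ w) * hvv - (c * φ w + (c * φ w) ^ 2 * ↑v⁻¹) * huu

theorem exists_mem_ETGroupRel_apply_add_mul {c : R} (hc : c ∈ I ⊓ Ideal.jacobson ⊥) {t : R}
    (ht : t ∈ traceIdeal R P) :
    ∀ u : R, IsUnit u → ∃ σ ∈ ETGroupRel R P I, σ (u + c * t, 0) = (u, 0) := by
  have hunit {u : R} (hu : IsUnit u) (t : R) : IsUnit (u + c * t) :=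
    hu.add_of_mem_jacobson_bot (Ideal.mul_mem_right t _ hc.2)
  unfold traceIdeal at ht
  induction ht using Submodule.iSup_induction' with
  | mem φ t ht =>
    obtain ⟨w, rfl⟩ := ht
    intro u hu
    simpa using exists_mem_ETGroupRel_apply_sub_mul hc.1 φ w (hunit hu (φ w)) (by simpa using hu)
  | zero => exact fun u _ => ⟨1, one_mem _, by simp⟩
  | add t t' _ _ iht iht' =>
    intro u hu
    obtain ⟨σ, hσ, hσu⟩ := iht (u + c * t') (hunit hu t')
    obtain ⟨σ', hσ', hσ'u⟩ := iht' u hu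
    refine ⟨σ' * σ, mul_mem hσ' hσ, ?_⟩
    rw [Module.End.mul_apply, mul_add, ← add_assoc, add_right_comm, hσu, hσ'u]

theorem exists_mem_ETGroupRel_apply_eq_one [Module.Finite R P] [Module.Projective R P] {r : ℕ}
    (hrk : HasRank R P r) (hr : r ≠ 0) {a : R} (ha : a - 1 ∈ I ⊓ Ideal.jacobson ⊥) {p : P}
    (hp : p ∈ (I • ⊤ : Submodule R P)) : ∃ σ ∈ ETGroupRel R P I, σ (a, p) = (1, 0) := by
  obtain ⟨a, rfl⟩ : IsUnit a := by simpa using isUnit_one.add_of_mem_jacobson_bot ha.2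
  have hq : -((↑a⁻¹ : R) • p) ∈ (I • ⊤ : Submodule R P) := neg_mem (Submodule.smul_mem _ _ hp)
  obtain ⟨σ, hσ, hσa⟩ := exists_mem_ETGroupRel_apply_add_mul ha
    (hrk.traceIdeal_eq_top hr ▸ Submodule.mem_top : (1 : R) ∈ traceIdeal R P) 1 isUnit_one
  refine ⟨σ * transvecP (-((↑a⁻¹ : R) • p)),
    mul_mem hσ (ETGroupRelBase_le I (transvecP_mem_ETGroupRelBase hq)), ?_⟩
  rw [Module.End.mul_apply, transvecP_apply, smul_neg, smul_smul, Units.mul_inv, one_smul,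
    add_neg_cancel, ← hσa, mul_one, add_sub_cancel]

end Endgame

section UmTransitive

variable {R : Type*} [CommRing R] {P : Type*} [AddCommGroup P] [Module R P] {I J : Ideal R}

theorem UmTransitive.quotient [Module.Projective R P] (h : UmTransitive R P I)
    (hJ : J ≤ Ideal.jacobson ⊥) :
    UmTransitive (R ⧸ J) (P ⧸ (J • ⊤ : Submodule R P)) (I.map (Ideal.Quotient.mk J)) := by
  rintro a' p' ⟨φ', hφ'⟩ ha' hp'
  obtain ⟨i, hi, hia⟩ := (Ideal.mem_map_iff_of_surjective _ Ideal.Quotient.mk_surjective).1 ha'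
  obtain ⟨p, hp, rfl⟩ := exists_mem_smul_top_mk_eq hp'
  have hred : reduceMod J (1 + i, p) = (a', Submodule.Quotient.mk p) := by simp [hia]
  obtain ⟨φ, hφ⟩ := exists_dual_prod_lift φ'
  have hunit : IsUnit (φ (1 + i, p)) := by
    have h1 : φ (1 + i, p) - 1 ∈ J := Ideal.Quotient.eq.1 (by rw [← hφ, hred, hφ', map_one])
    simpa using isUnit_one.add_of_mem_jacobson_bot (hJ h1)
  obtain ⟨τ, hτ, hτx⟩ :=
    h (1 + i) p ⟨hunit.unit⁻¹ • φ, by simp [Units.smul_def]⟩ (by simpa using hi) hp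
  obtain ⟨τ', hτ', hττ'⟩ := exists_covers_of_mem_ETGroupRel J hτ
  exact ⟨τ', hτ', by rw [← hred, hττ', hτx]; simp⟩

theorem UmTransitive.of_quotient [Module.Finite R P] [Module.Projective R P] {r : ℕ}
    (hrk : HasRank R P r) (hr : r ≠ 0) (hJ : J ≤ Ideal.jacobson ⊥)
    (h : UmTransitive (R ⧸ J) (P ⧸ (J • ⊤ : Submodule R P)) (I.map (Ideal.Quotient.mk J))) :
    UmTransitive R P I := by
  rintro a p ⟨φ, hφ⟩ ha hp
  obtain ⟨φ', hφ'⟩ := exists_dual_prod_reduceMod J φ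
  obtain ⟨τ', hτ', hτ'x⟩ := h (Ideal.Quotient.mk J a) (Submodule.Quotient.mk p)
    ⟨φ', (hφ' (a, p)).trans (by rw [hφ, map_one])⟩
    (by simpa using Ideal.mem_map_of_mem (Ideal.Quotient.mk J) ha) (mk_mem_map_smul_top J hp)
  obtain ⟨τ, hτ, hττ'⟩ := exists_covered_of_mem_ETGroupRel hτ'
  have hτx : reduceMod J (τ (a, p)) = (1, 0) := (hττ' (a, p)).symm.trans hτ'x
  have hJ1 : (τ (a, p)).1 - 1 ∈ J :=
    Ideal.Quotient.eq.1 ((congrArg Prod.fst hτx).trans (map_one _).symm)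
  obtain ⟨hI1, hI2⟩ := sub_mem_of_mem_ETGroupRel hτ (a, p)
  obtain ⟨σ, hσ, hσx⟩ := exists_mem_ETGroupRel_apply_eq_one hrk hr
    ⟨by simpa using I.add_mem hI1 ha, hJ hJ1⟩ (by simpa using add_mem hI2 hp)
  exact ⟨σ * τ, mul_mem hσ hτ, hσx⟩

end UmTransitive

/-- For a finitely generated projective module `P` of rank `r ≥ 2` and an ideal `I`,
`Um(R ⊕ P, I) = e₁ · ET(R ⊕ P, I)` holds iff it holds modulo the nilradical. -/
theorem statement3 (R : Type*) [CommRing R] (P : Type*) [AddCommGroup P] [Module R P]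
    [Module.Finite R P] [Module.Projective R P] (r : ℕ) (hr : 2 ≤ r) (hrk : HasRank R P r)
    (I : Ideal R) :
    UmTransitive R P I ↔
      UmTransitive (R ⧸ nilradical R) (P ⧸ ((nilradical R) • ⊤ : Submodule R P))
        (I.map (Ideal.Quotient.mk (nilradical R))) := by
  have hJ : nilradical R ≤ Ideal.jacobson ⊥ := Ideal.radical_le_jacobson
  exact ⟨fun h => h.quotient hJ, UmTransitive.of_quotient hrk (by omega) hJ⟩
end

section
/- Let $B \subseteq C$ be commutative rings and $x \in B$ an element such that $B_x = C_x$ (the localizations at $x$ agree). Then for every $b \in B$, the induced map $B/(1+xb)B \to C/(1+xb)C$ is an isomorphism. -/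
/-!
Since `x * (-b) = 1 - (1 + x * b)`, the element `x` is a unit modulo `1 + x * b`, in `B` and
hence in `C`. Multiplying by a suitable power of `x` moves any element of `C` into `B`, and
because that power is invertible modulo `1 + x * b` this costs nothing in either quotient.
-/

theorem isUnit_mk_span_one_add_mul {R : Type*} [CommRing R] (x b : R) :
    IsUnit (Ideal.Quotient.mk (Ideal.span {1 + x * b}) x) :=
  IsUnit.of_mul_eq_one (Ideal.Quotient.mk _ (-b)) <| by
    rw [← map_mul, ← map_one (Ideal.Quotient.mk _), Ideal.Quotient.mk_eq_mk_iff_sub_mem,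
      Ideal.mem_span_singleton]
    exact ⟨-1, by ring⟩

section PowerLocalization

variable {C : Type*} [CommRing C] {B : Subring C} {x a : B}
  (hx : IsUnit (Ideal.Quotient.mk (Ideal.span {a}) x))
  (hloc : ∀ c : C, ∃ n : ℕ, (x : C) ^ n * c ∈ B)
include hx hloc

theorem Subring.comap_span_singleton_le_of_isUnit_mk :
    (Ideal.span {(a : C)}).comap B.subtype ≤ Ideal.span {a} := by
  intro f hf
  obtain ⟨c, hc⟩ := Ideal.mem_span_singleton'.mp (Ideal.mem_comap.mp hf)
  obtain ⟨n, hn⟩ := hloc c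
  have hxf : x ^ n * f ∈ Ideal.span {a} := by
    refine Ideal.mem_span_singleton'.mpr ⟨⟨_, hn⟩, Subtype.ext ?_⟩
    simp only [Subring.coe_mul, Subring.coe_pow, B.coe_subtype] at hc ⊢
    rw [mul_assoc, hc]
  rw [← Ideal.Quotient.eq_zero_iff_mem] at hxf ⊢
  rwa [map_mul, map_pow, (hx.pow n).mul_right_eq_zero] at hxf

theorem Subring.quotientMap_span_singleton_surjective
    (h : Ideal.span {a} ≤ (Ideal.span {(a : C)}).comap B.subtype) :
    Function.Surjective (Ideal.quotientMap (Ideal.span {(a : C)}) B.subtype h) := by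
  intro y
  obtain ⟨c, rfl⟩ := Ideal.Quotient.mk_surjective y
  obtain ⟨n, hn⟩ := hloc c
  set φ := Ideal.quotientMap (Ideal.span {(a : C)}) B.subtype h
  obtain ⟨u, hu⟩ : ∃ u, u * Ideal.Quotient.mk (Ideal.span {a}) x = 1 := ⟨_, hx.val_inv_mul⟩
  have hφx : φ u * Ideal.Quotient.mk _ (x : C) = 1 := by
    rw [show Ideal.Quotient.mk _ (x : C) = φ (Ideal.Quotient.mk _ x) from rfl, ← map_mul, hu,
      map_one]
  refine ⟨u ^ n * Ideal.Quotient.mk (Ideal.span {a}) ⟨_, hn⟩, ?_⟩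
  rw [map_mul, map_pow, Ideal.quotientMap_mk]
  change φ _ ^ n * Ideal.Quotient.mk _ ((x : C) ^ n * c) = _
  rw [map_mul, map_pow, ← mul_assoc, ← mul_pow, hφx, one_pow, one_mul]

end PowerLocalization

/-- If `B ⊆ C` and `B_x = C_x`, then `B/(1+xb)B → C/(1+xb)C` is an isomorphism
for every `b ∈ B`. -/
theorem statement4 (C : Type*) [CommRing C] (B : Subring C) (x b : B)
    (hloc : ∀ c : C, ∃ n : ℕ, (x : C) ^ n * c ∈ B) :
    Function.Bijective
      (Ideal.quotientMap (I := Ideal.span {(1 + x * b : B)})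
        (Ideal.span {((1 + x * b : B) : C)}) (SubringClass.subtype B)
        (Ideal.span_le.mpr (Set.singleton_subset_iff.mpr
          (Ideal.mem_comap.mpr (Ideal.subset_span (Set.mem_singleton _)))))) := by
  have hx := isUnit_mk_span_one_add_mul x b
  exact ⟨Ideal.quotientMap_injective' (Subring.comap_span_singleton_le_of_isUnit_mk hx hloc),
    Subring.quotientMap_span_singleton_surjective hx hloc _⟩
end

section
/- Let $B \subseteq C$ be commutative Noetherian rings of dimension at most $\delta$, let $x \in B$ be such that $B_x = C_x$, and let $\mathfrak{A}$ be an ideal of $C$ of height at least $\delta$ with $\mathfrak{A} + xC = C$. Then there exists $b \in B$ such that $1 + xb \in \mathfrak{A}$. -/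
/-!
Let `𝔞 = 𝔄 ∩ B`. It suffices to show `𝔞 + xB = B`. Otherwise pick a maximal ideal `𝔪 ⊇ 𝔞 + xB`.
Since `𝔄` is comaximal with `x`, it is saturated with respect to `x`, so `𝔄` misses the
multiplicative set `(B ∖ 𝔪) · xᴺ`, and some prime `Q ⊇ 𝔄` of `C` misses it too; then `x ∉ Q` and
`Q ∩ B ⊊ 𝔪`. As `B_x = C_x`, contraction to `B` is strictly monotone on primes avoiding `x`, so
`δ ≤ ht Q ≤ ht (Q ∩ B) < ht 𝔪 ≤ δ`.
-/

namespace Ideal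

variable {R : Type*} [CommRing R]

theorem mem_of_pow_mul_mem_of_sup_span_eq_top {I : Ideal R} {x s : R} {k : ℕ}
    (h : I ⊔ span {x} = ⊤) (hs : x ^ k * s ∈ I) : s ∈ I := by
  have hk : I ⊔ span {x ^ k} = ⊤ := by
    rw [← span_singleton_pow]
    exact sup_pow_eq_top h
  rw [← span_singleton_le_iff_mem, ← top_mul (span {s}), ← hk, sup_mul,
    span_singleton_mul_span_singleton]
  exact sup_le mul_le_left ((span_singleton_le_iff_mem _).2 hs)

theorem exists_isPrime_comap_lt_of_sup_span_eq_top {S : Type*} [CommRing S] (f : R →+* S)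
    {I : Ideal S} {x : R} (hI : I ⊔ span {f x} = ⊤) {𝔪 : Ideal R} [𝔪.IsPrime]
    (hI𝔪 : I.comap f ≤ 𝔪) (hx : x ∈ 𝔪) :
    ∃ Q : Ideal S, Q.IsPrime ∧ I ≤ Q ∧ f x ∉ Q ∧ Q.comap f < 𝔪 := by
  let M : Submonoid S := (𝔪.primeCompl ⊔ Submonoid.powers x).map f
  have hM : Disjoint (I : Set S) M := by
    rw [Set.disjoint_right]
    rintro _ ⟨_, hm, rfl⟩ hmI
    obtain ⟨s, hs, _, ⟨k, rfl⟩, rfl⟩ := Submonoid.mem_sup.mp hm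
    rw [map_mul, map_pow, mul_comm] at hmI
    have hsI : f s ∈ I := mem_of_pow_mul_mem_of_sup_span_eq_top hI hmI
    exact hs (hI𝔪 hsI)
  obtain ⟨Q, hQ, hIQ, hQM⟩ := exists_le_prime_disjoint I M hM
  have hfM : ∀ r ∈ 𝔪.primeCompl ⊔ Submonoid.powers x, f r ∉ Q := fun r hr hrQ =>
    Set.disjoint_left.mp hQM hrQ ⟨r, hr, rfl⟩
  have hxQ : f x ∉ Q := hfM x (Submonoid.mem_sup_right (Submonoid.mem_powers x))
  have hQ𝔪 : Q.comap f ≤ 𝔪 := fun r hr => by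
    by_contra hr𝔪
    exact hfM r (Submonoid.mem_sup_left hr𝔪) hr
  exact ⟨Q, hQ, hIQ, hxQ, lt_of_le_of_ne hQ𝔪 fun h => hxQ (h ▸ hx : x ∈ Q.comap f)⟩

end Ideal

namespace Subring

variable {C : Type*} [CommRing C] (B : Subring C) {x : B}

theorem comap_lt_comap_of_pow_mul_mem (hloc : ∀ c : C, ∃ n : ℕ, (x : C) ^ n * c ∈ B)
    {P Q : Ideal C} [hP : P.IsPrime] (hPQ : P < Q) (hx : (x : C) ∉ P) :
    P.comap B.subtype < Q.comap B.subtype := by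
  obtain ⟨c, hcQ, hcP⟩ := SetLike.exists_of_lt hPQ
  obtain ⟨n, hn⟩ := hloc c
  refine lt_of_le_of_ne (Ideal.comap_mono hPQ.le) fun h => ?_
  have hxcQ : (x : C) ^ n * c ∈ Q := Q.mul_mem_left _ hcQ
  have hxcP : (x : C) ^ n * c ∈ P := by
    change (⟨_, hn⟩ : B) ∈ P.comap B.subtype
    rw [h]
    exact hxcQ
  exact (hP.mem_or_mem hxcP).elim (fun h => hx (hP.mem_of_pow_mem n h)) hcP

theorem height_le_height_comap_of_pow_mul_mem (hloc : ∀ c : C, ∃ n : ℕ, (x : C) ^ n * c ∈ B)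
    (Q : Ideal C) [hQ : Q.IsPrime] (hx : (x : C) ∉ Q) :
    Q.height ≤ (Q.comap B.subtype).height := by
  let q : PrimeSpectrum C := ⟨Q, hQ⟩
  let f : Set.Iic q → Set.Iic (PrimeSpectrum.comap B.subtype q) :=
    fun P => ⟨PrimeSpectrum.comap B.subtype P, Ideal.comap_mono P.2⟩
  have hf : StrictMono f := fun P₁ P₂ h =>
    comap_lt_comap_of_pow_mul_mem B hloc h fun h₁ => hx (P₂.2 (h.le h₁))
  have hq : (Q.comap B.subtype).height = Order.height (PrimeSpectrum.comap B.subtype q) := by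
    rw [← PrimeSpectrum.height_eq_orderHeight, PrimeSpectrum.comap_asIdeal]
  rw [PrimeSpectrum.height_eq_orderHeight q, hq, ← WithBot.coe_le_coe,
    Order.height_eq_krullDim_Iic, Order.height_eq_krullDim_Iic]
  exact Order.krullDim_le_of_strictMono f hf

end Subring

theorem statement5_general (C : Type*) [CommRing C] (B : Subring C)
    (δ : ℕ)
    (hdimB : ringKrullDim B ≤ δ) (x : B)
    (hloc : ∀ c : C, ∃ n : ℕ, (x : C) ^ n * c ∈ B)
    (𝔄 : Ideal C)
    (hht : ∀ (p : Ideal C) (hp : p.IsPrime), 𝔄 ≤ p →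
      letI := hp
      (δ : WithBot ℕ∞) ≤ ringKrullDim (Localization.AtPrime p))
    (hcomax : 𝔄 ⊔ Ideal.span {(x : C)} = ⊤) :
    ∃ b : B, (1 : C) + (x : C) * (b : C) ∈ 𝔄 := by
  suffices h : Ideal.span {x} ⊔ 𝔄.comap B.subtype = ⊤ by
    obtain ⟨b, a, ha, hab⟩ := Ideal.mem_span_singleton_sup.mp (h ▸ Submodule.mem_top : (1 : B) ∈ _)
    refine ⟨-b, ?_⟩
    have h1 : (1 : C) + x * ↑(-b) = a := by
      have hab' := congrArg ((↑) : B → C) hab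
      push_cast at hab' ⊢
      linear_combination -hab'
    rwa [h1]
  by_contra hne
  obtain ⟨𝔪, h𝔪, hle⟩ := Ideal.exists_le_maximal _ hne
  obtain ⟨Q, hQ, h𝔄Q, hxQ, hQ𝔪⟩ := Ideal.exists_isPrime_comap_lt_of_sup_span_eq_top B.subtype
    hcomax (le_sup_right.trans hle) (hle (Ideal.mem_sup_left (Ideal.mem_span_singleton_self x)))
  have hδQ : (δ : ℕ∞) ≤ Q.height := by
    have := hht Q hQ h𝔄Q
    rw [IsLocalization.AtPrime.ringKrullDim_eq_height Q] at this
    exact_mod_cast this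
  have h𝔪δ : 𝔪.height ≤ δ := by
    have := (ringKrullDim_le_iff_height_le _).mp hdimB h𝔪.isPrime
    exact_mod_cast this
  have hδ : (δ : ℕ∞) + 1 ≤ δ := calc
    (δ : ℕ∞) + 1 ≤ (Q.comap B.subtype).height + 1 := by
      grw [hδQ, B.height_le_height_comap_of_pow_mul_mem hloc Q hxQ]
    _ ≤ 𝔪.height := Ideal.height_add_one_le_of_lt_of_isPrime hQ𝔪
    _ ≤ δ := h𝔪δ
  exact absurd hδ (by norm_cast; omega)

/-- If `B ⊆ C` are Noetherian of dimension at most `δ`, `B_x = C_x`, and `𝔄` is an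
ideal of `C` of height at least `δ` comaximal with `x`, then `1 + xb ∈ 𝔄` for some `b ∈ B`. -/
theorem statement5 (C : Type*) [CommRing C] [IsNoetherianRing C] (B : Subring C)
    [IsNoetherianRing B] (δ : ℕ)
    (hdimB : ringKrullDim B ≤ δ) (hdimC : ringKrullDim C ≤ δ) (x : B)
    (hloc : ∀ c : C, ∃ n : ℕ, (x : C) ^ n * c ∈ B)
    (𝔄 : Ideal C)
    (hht : ∀ (p : Ideal C) (hp : p.IsPrime), 𝔄 ≤ p →
      letI := hp
      (δ : WithBot ℕ∞) ≤ ringKrullDim (Localization.AtPrime p))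
    (hcomax : 𝔄 ⊔ Ideal.span {(x : C)} = ⊤) :
    ∃ b : B, (1 : C) + (x : C) * (b : C) ∈ 𝔄 :=
  statement5_general C B δ hdimB x hloc 𝔄 hht hcomax
end

section
/- Let $R$ be a commutative ring, $I$ an ideal of $R$ such that the quotient map $f : R \to R/I$ admits a ring-theoretic section $g : R/I \to R$ (i.e. $f \circ g = \mathrm{id}$). Then the relative isotopy group satisfies $H_n(R, I) = H_n(R) \cap SL_n(R, I)$ for $n \geq 2$. -/
/-!
A unit polynomial over a reduced ring is constant, so along an isotopy `α` the determinant
`det α(x)` is constant and `det M = det α(0) = 1`.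

Conversely, `ρ = g ∘ (R → R/I)` is an endomorphism of `R` killing `I` and inducing the identity
on `R/I`. If `β` is an isotopy from `1` to `M ≡ 1 (mod I)`, then `β · ρ(β)⁻¹` is again an isotopy
from `1` to `M · ρ(M)⁻¹ = M`, and it is `≡ β · β⁻¹ = 1 (mod I)`.
-/

/-- `M ∈ H_n(R)` : `M` is an invertible matrix isotopic to the identity. -/
def IsIsotopicToId (R : Type*) [CommRing R] {n : ℕ} (M : Matrix (Fin n) (Fin n) R) : Prop :=
  IsUnit M ∧ ∃ α : Matrix (Fin n) (Fin n) (Polynomial R), IsUnit α ∧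
    α.map (Polynomial.eval 0) = 1 ∧ α.map (Polynomial.eval 1) = M

/-- `M ∈ H_n(R, I)` : the relative isotopy condition, where the isotopy is congruent to the
identity modulo `I·x·R[x]` (polynomials with zero constant term and all coefficients in `I`). -/
def IsIsotopicToIdRel (R : Type*) [CommRing R] {n : ℕ} (I : Ideal R)
    (M : Matrix (Fin n) (Fin n) R) : Prop :=
  IsUnit M ∧ (∀ i j, M i j - (1 : Matrix (Fin n) (Fin n) R) i j ∈ I) ∧
  ∃ α : Matrix (Fin n) (Fin n) (Polynomial R), IsUnit α ∧
    (∀ i j, (α i j - (1 : Matrix (Fin n) (Fin n) (Polynomial R)) i j).coeff 0 = 0 ∧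
            ∀ m : ℕ, (α i j - (1 : Matrix (Fin n) (Fin n) (Polynomial R)) i j).coeff m ∈ I) ∧
    α.map (Polynomial.eval 1) = M

open Polynomial

lemma Polynomial.eval_eq_of_isUnit {R : Type*} [CommRing R] [IsReduced R] {p : R[X]}
    (hp : IsUnit p) (a b : R) : p.eval a = p.eval b := by
  have hdeg : p.natDegree = 0 := by
    by_contra h
    exact not_isUnit_of_natDegree_pos_of_isReduced p (Nat.pos_of_ne_zero h) hp
  rw [eq_C_of_natDegree_eq_zero hdeg, eval_C, eval_C]

lemma Polynomial.mem_ker_evalRingHom_zero {R : Type*} [CommRing R] {p : R[X]} :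
    p ∈ RingHom.ker (evalRingHom 0) ↔ p.coeff 0 = 0 := by
  rw [RingHom.mem_ker, coe_evalRingHom, coeff_zero_eq_eval_zero]

lemma Polynomial.mem_ker_mapRingHom_mk {R : Type*} [CommRing R] {I : Ideal R} {p : R[X]} :
    p ∈ RingHom.ker (mapRingHom (Ideal.Quotient.mk I)) ↔ ∀ m, p.coeff m ∈ I := by
  rw [ker_mapRingHom, Ideal.mk_ker, Ideal.mem_map_C_iff]

lemma Matrix.map_eq_one_iff_sub_mem_ker {ι S T : Type*} [DecidableEq ι] [Ring S] [Ring T]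
    (f : S →+* T) (A : Matrix ι ι S) :
    A.map f = 1 ↔ ∀ i j, A i j - (1 : Matrix ι ι S) i j ∈ RingHom.ker f := by
  rw [← Matrix.map_one f f.map_zero f.map_one, ← Matrix.ext_iff]
  simp only [Matrix.map_apply, RingHom.mem_ker, map_sub, sub_eq_zero]

namespace Matrix.GeneralLinearGroup

variable {ι R : Type*} [Fintype ι] [DecidableEq ι] [CommRing R]

lemma det_map_evalRingHom_eq [IsReduced R] (u : GL ι R[X]) (a b : R) :
    (map (evalRingHom a) u : Matrix ι ι R).det = (map (evalRingHom b) u : Matrix ι ι R).det := by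
  have h := eval_eq_of_isUnit (isUnits_det_units u) a b
  rwa [← coe_evalRingHom, ← coe_evalRingHom, RingHom.map_det, RingHom.map_det] at h

lemma map_evalRingHom_map_mapRingHom (ρ : R →+* R) {a : R} (ha : ρ a = a) (u : GL ι R[X]) :
    map (evalRingHom a) (map (mapRingHom ρ) u) = map ρ (map (evalRingHom a) u) := by
  ext i j
  simp only [val_map_apply, Matrix.map_apply, coe_evalRingHom,
    coe_mapRingHom, eval_map, ← eval₂_at_apply, ha]

lemma exists_map_quotient_eq_one_of_retraction {I : Ideal R} (ρ : R →+* R)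
    (hρ : (Ideal.Quotient.mk I).comp ρ = Ideal.Quotient.mk I) (u : GL ι R[X])
    (h0 : map (evalRingHom 0) u = 1) (h1 : map ρ (map (evalRingHom 1) u) = 1) :
    ∃ v : GL ι R[X], map (evalRingHom 0) v = 1 ∧ map (mapRingHom (Ideal.Quotient.mk I)) v = 1 ∧
      map (evalRingHom 1) v = map (evalRingHom 1) u := by
  refine ⟨u * (map (mapRingHom ρ) u)⁻¹, ?_, ?_, ?_⟩
  · rw [map_mul, map_inv, map_evalRingHom_map_mapRingHom ρ (map_zero ρ), h0, map_one,
      mul_inv_cancel]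
  · rw [map_mul, map_inv, ← MonoidHom.comp_apply, ← map_comp, mapRingHom_comp, hρ, mul_inv_cancel]
  · rw [map_mul, map_inv, map_evalRingHom_map_mapRingHom ρ (map_one ρ), h1, inv_one, mul_one]

end Matrix.GeneralLinearGroup

open Matrix.GeneralLinearGroup

section Isotopy

variable {R : Type*} [CommRing R] {n : ℕ} {M : Matrix (Fin n) (Fin n) R}

lemma isIsotopicToId_iff : IsIsotopicToId R M ↔ ∃ u : GL (Fin n) R[X],
    map (evalRingHom 0) u = 1 ∧ (map (evalRingHom 1) u : Matrix (Fin n) (Fin n) R) = M := by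
  constructor
  · rintro ⟨-, α, hα, h0, h1⟩
    exact ⟨hα.unit, Units.ext h0, h1⟩
  · rintro ⟨u, h0, h1⟩
    exact ⟨h1 ▸ (map (evalRingHom 1) u).isUnit, u, u.isUnit, congrArg Units.val h0, h1⟩

lemma isIsotopicToIdRel_iff {I : Ideal R} : IsIsotopicToIdRel R I M ↔
    (∀ i j, M i j - (1 : Matrix (Fin n) (Fin n) R) i j ∈ I) ∧ ∃ u : GL (Fin n) R[X],
      map (evalRingHom 0) u = 1 ∧ map (mapRingHom (Ideal.Quotient.mk I)) u = 1 ∧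
      (map (evalRingHom 1) u : Matrix (Fin n) (Fin n) R) = M := by
  have hrel (α : Matrix (Fin n) (Fin n) R[X]) :
      (∀ i j, (α i j - (1 : Matrix (Fin n) (Fin n) R[X]) i j).coeff 0 = 0 ∧
        ∀ m, (α i j - (1 : Matrix (Fin n) (Fin n) R[X]) i j).coeff m ∈ I) ↔
      α.map (evalRingHom 0) = 1 ∧ α.map (mapRingHom (Ideal.Quotient.mk I)) = 1 := by
    simp only [Matrix.map_eq_one_iff_sub_mem_ker, mem_ker_evalRingHom_zero, mem_ker_mapRingHom_mk,
      ← forall_and]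
  constructor
  · rintro ⟨-, hM, α, hα, hco, h1⟩
    obtain ⟨h0, hI⟩ := (hrel α).1 hco
    exact ⟨hM, hα.unit, Units.ext h0, Units.ext hI, h1⟩
  · rintro ⟨hM, u, h0, hI, h1⟩
    exact ⟨h1 ▸ (map (evalRingHom 1) u).isUnit, hM, u, u.isUnit,
      (hrel u).2 ⟨congrArg Units.val h0, congrArg Units.val hI⟩, h1⟩

lemma IsIsotopicToIdRel.isIsotopicToId {I : Ideal R} (h : IsIsotopicToIdRel R I M) :
    IsIsotopicToId R M := by
  obtain ⟨-, u, h0, -, h1⟩ := isIsotopicToIdRel_iff.1 h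
  exact isIsotopicToId_iff.2 ⟨u, h0, h1⟩

lemma IsIsotopicToId.det_eq_one [IsReduced R] (h : IsIsotopicToId R M) : M.det = 1 := by
  obtain ⟨u, h0, rfl⟩ := isIsotopicToId_iff.1 h
  rw [det_map_evalRingHom_eq u 1 0, h0, Units.val_one, Matrix.det_one]

lemma isIsotopicToIdRel_of_section {I : Ideal R} (g : R ⧸ I →+* R)
    (hg : (Ideal.Quotient.mk I).comp g = RingHom.id (R ⧸ I)) (h : IsIsotopicToId R M)
    (hM : ∀ i j, M i j - (1 : Matrix (Fin n) (Fin n) R) i j ∈ I) : IsIsotopicToIdRel R I M := by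
  obtain ⟨u, h0, rfl⟩ := isIsotopicToId_iff.1 h
  have hρ : (Ideal.Quotient.mk I).comp (g.comp (Ideal.Quotient.mk I)) = Ideal.Quotient.mk I := by
    rw [← RingHom.comp_assoc, hg, RingHom.id_comp]
  have hMI : map (Ideal.Quotient.mk I) (map (evalRingHom 1) u) = 1 := by
    refine Units.ext ((Matrix.map_eq_one_iff_sub_mem_ker _ _).2 ?_)
    rwa [Ideal.mk_ker]
  have hρM : map (g.comp (Ideal.Quotient.mk I)) (map (evalRingHom 1) u) = 1 := by
    rw [Matrix.GeneralLinearGroup.map_comp, MonoidHom.comp_apply, hMI, map_one]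
  obtain ⟨v, hv0, hvI, hv1⟩ := exists_map_quotient_eq_one_of_retraction _ hρ u h0 hρM
  exact isIsotopicToIdRel_iff.2 ⟨hM, v, hv0, hvI, congrArg Units.val hv1⟩

end Isotopy

theorem statement13_general (R : Type*) [CommRing R] [IsReduced R] (I : Ideal R)
    (g : R ⧸ I →+* R) (hg : (Ideal.Quotient.mk I).comp g = RingHom.id (R ⧸ I))
    (n : ℕ) (M : Matrix (Fin n) (Fin n) R) :
    IsIsotopicToIdRel R I M ↔
      (IsIsotopicToId R M ∧ M.det = 1 ∧
        ∀ i j, M i j - (1 : Matrix (Fin n) (Fin n) R) i j ∈ I) :=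
  ⟨fun h => ⟨h.isIsotopicToId, h.isIsotopicToId.det_eq_one, h.2.1⟩,
    fun ⟨h, _, hM⟩ => isIsotopicToIdRel_of_section g hg h hM⟩

/-- If `R → R/I` admits a ring section, then for `n ≥ 2` the relative isotopy
group satisfies `H_n(R, I) = H_n(R) ∩ SL_n(R, I)` (with `R` reduced so that
`H_n(R, I) ⊆ SL_n(R, I)`). -/
theorem statement13 (R : Type*) [CommRing R] [IsReduced R] (I : Ideal R)
    (g : R ⧸ I →+* R) (hg : (Ideal.Quotient.mk I).comp g = RingHom.id (R ⧸ I))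
    (n : ℕ) (hn : 2 ≤ n) (M : Matrix (Fin n) (Fin n) R) :
    IsIsotopicToIdRel R I M ↔
      (IsIsotopicToId R M ∧ M.det = 1 ∧
        ∀ i j, M i j - (1 : Matrix (Fin n) (Fin n) R) i j ∈ I) :=
  statement13_general R I g hg n M
end

section
/- Let $R$ be a commutative ring, $I$ an ideal such that the quotient map $f : R \to R/I$ has a ring section $g$. Assume $\mathrm{Um}_n(R) = e_1 \cdot H_n(R)$ for some $n \geq 2$. If $v_1, v_2 \in \mathrm{Um}_n(R)$ satisfy $v_1 \equiv v_2 \pmod I$, then there exists $\beta \in H_n(R, I)$ with $v_1 = v_2 \beta$. -/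
open scoped TensorProduct

set_option synthInstance.maxHeartbeats 1000000
set_option maxHeartbeats 2000000


/-- The group of elementary matrices `E_n(R)`, as a submonoid of square matrices
(it is closed under inverses since the inverse of a transvection is a transvection). -/
def ElemGroup (R : Type*) [CommRing R] (n : ℕ) : Submonoid (Matrix (Fin n) (Fin n) R) :=
  Submonoid.closure {M | ∃ i j : Fin n, ∃ c : R, i ≠ j ∧ M = Matrix.transvection i j c}

/-- The relative elementary group `E_n(R, I)` : the normal closure in `E_n(R)` of the
subgroup generated by elementary matrices with off-diagonal entry in `I`. -/
def ElemGroupRel (R : Type*) [CommRing R] (n : ℕ) (I : Ideal R) :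
    Submonoid (Matrix (Fin n) (Fin n) R) :=
  Submonoid.closure {M | ∃ g h e : Matrix (Fin n) (Fin n) R,
    g ∈ ElemGroup R n ∧ h ∈ ElemGroup R n ∧ g * h = 1 ∧ h * g = 1 ∧
    e ∈ Submonoid.closure
      {M' | ∃ i j : Fin n, ∃ c : R, i ≠ j ∧ c ∈ I ∧ M' = Matrix.transvection i j c} ∧
    M = g * e * h}

/-- A row is unimodular if its entries generate the unit ideal. -/
def IsUnimodularRow (R : Type*) [CommRing R] {n : ℕ} (v : Fin n → R) : Prop :=
  ∃ w : Fin n → R, ∑ i, v i * w i = 1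

/-- The first standard basis row `e₁ = (1, 0, …, 0)`. -/
def e₁ (R : Type*) [CommRing R] (n : ℕ) : Fin n → R := fun i => if (i : ℕ) = 0 then 1 else 0

/-!
Write `v₁ = e₁ M₁`, `v₂ = e₁ M₂` with isotopies `α₁, α₂` from `1` to `M₁, M₂`, and let
`h = g ∘ (R → R/I)`, a ring endomorphism of `R` that is the identity modulo `I` and kills `I`.
For an isotopy `α`, the path `h(α)⁻¹ α` is `1` at `x = 0` and `1` modulo `I`, so it is a relative
isotopy; hence so is `γ = (h(α₂)⁻¹ α₂)⁻¹ (h(α₁)⁻¹ α₁)`. Its endpoint is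
`β = M₂⁻¹ h(M₂) h(M₁)⁻¹ M₁`, and `v₂ β = e₁ h(M₂) h(M₁)⁻¹ M₁ = v₁` because
`e₁ h(M₂) = h(v₂) = h(v₁) = e₁ h(M₁)`.
-/

open Polynomial Matrix

section

variable {R S : Type*} [CommRing R] [CommRing S]

theorem map_map_polynomialMap_eval_zero {m n : Type*} (f : R →+* S) (A : Matrix m n R[X]) :
    (A.map (Polynomial.map f)).map (eval 0) = (A.map (eval 0)).map f := by
  ext i j
  exact eval_zero_map f (A i j)

theorem map_map_polynomialMap_eval_one {m n : Type*} (f : R →+* S) (A : Matrix m n R[X]) :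
    (A.map (Polynomial.map f)).map (eval 1) = (A.map (eval 1)).map f := by
  ext i j
  exact eval_one_map f (A i j)

variable (ι : Type*) [Fintype ι] [DecidableEq ι]

/-- `GL(R[x], I·x·R[x])`, as the intersection of the kernels of reduction modulo `x` and modulo `I`. -/
noncomputable def relIsotopyGroup (I : Ideal R) : Subgroup (Matrix ι ι R[X])ˣ :=
  (Units.map ((evalRingHom (0 : R)).mapMatrix : Matrix ι ι R[X] →+* Matrix ι ι R).toMonoidHom).ker ⊓
  (Units.map ((mapRingHom (Ideal.Quotient.mk I)).mapMatrix :
    Matrix ι ι R[X] →+* Matrix ι ι (R ⧸ I)[X]).toMonoidHom).ker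

variable {ι}

theorem map_sub_one_apply_eq_zero (f : R →+* S) {A : Matrix ι ι R} (hA : A.map f = 1)
    (i j : ι) : f (A i j - (1 : Matrix ι ι R) i j) = 0 := by
  have hA' : f.mapMatrix (A - 1) = 0 := by
    rw [map_sub, map_one, RingHom.mapMatrix_apply, hA, sub_self]
  exact congrFun₂ hA' i j

theorem mem_relIsotopyGroup_iff {I : Ideal R} {γ : (Matrix ι ι R[X])ˣ} :
    γ ∈ relIsotopyGroup ι I ↔
      (γ : Matrix ι ι R[X]).map (eval 0) = 1 ∧
        (γ : Matrix ι ι R[X]).map (Polynomial.map (Ideal.Quotient.mk I)) = 1 := by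
  simp [relIsotopyGroup, Units.ext_iff, RingHom.mapMatrix_apply]

theorem inv_map_mul_mem_relIsotopyGroup {I : Ideal R} (h : R →+* R)
    (hh : (Ideal.Quotient.mk I).comp h = Ideal.Quotient.mk I) (u : (Matrix ι ι R[X])ˣ)
    (hu : (u : Matrix ι ι R[X]).map (eval 0) = 1) :
    (Units.map (mapRingHom h).mapMatrix.toMonoidHom u)⁻¹ * u ∈ relIsotopyGroup ι I := by
  have hmap0 : ((u : Matrix ι ι R[X]).map (Polynomial.map h)).map (eval 0) =
      (u : Matrix ι ι R[X]).map (eval 0) := by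
    rw [map_map_polynomialMap_eval_zero, hu, Matrix.map_one _ h.map_zero h.map_one]
  have hmapI : ((u : Matrix ι ι R[X]).map (Polynomial.map h)).map
      (Polynomial.map (Ideal.Quotient.mk I)) = (u : Matrix ι ι R[X]).map
        (Polynomial.map (Ideal.Quotient.mk I)) := by
    rw [Matrix.map_map]
    congr 1
    funext p
    rw [Function.comp_apply, Polynomial.map_map, hh]
  refine Subgroup.mem_inf.mpr ⟨?_, ?_⟩ <;>
    rw [MonoidHom.mem_ker, map_mul, map_inv, inv_mul_eq_one] <;> ext1 <;>
    simp only [Units.coe_map, RingHom.toMonoidHom_eq_coe, MonoidHom.coe_coe,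
      RingHom.mapMatrix_apply, coe_mapRingHom, coe_evalRingHom]
  exacts [hmap0, hmapI]

theorem vecMul_inv_mul_mul_inv_mul {a₁ a₂ b₁ b₂ : (Matrix ι ι R)ˣ} {w : ι → R}
    (hb : w ᵥ* (b₂ : Matrix ι ι R) = w ᵥ* (b₁ : Matrix ι ι R)) :
    (w ᵥ* (a₂ : Matrix ι ι R)) ᵥ* ((b₂⁻¹ * a₂)⁻¹ * (b₁⁻¹ * a₁) : (Matrix ι ι R)ˣ) =
      w ᵥ* (a₁ : Matrix ι ι R) := by
  have hγ : (b₂⁻¹ * a₂)⁻¹ * (b₁⁻¹ * a₁) = a₂⁻¹ * b₂ * b₁⁻¹ * a₁ := by group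
  simp only [hγ, Units.val_mul, vecMul_vecMul, ← mul_assoc, Units.mul_inv, one_mul]
  rw [← vecMul_vecMul, ← vecMul_vecMul, hb, vecMul_vecMul, vecMul_vecMul, Units.mul_inv_cancel_left]

end

theorem isIsotopicToIdRel_eval_one {R : Type*} [CommRing R] {n : ℕ} {I : Ideal R}
    {γ : (Matrix (Fin n) (Fin n) R[X])ˣ} (hγ : γ ∈ relIsotopyGroup (Fin n) I) :
    IsIsotopicToIdRel R I ((γ : Matrix (Fin n) (Fin n) R[X]).map (eval 1)) := by
  obtain ⟨h0, hI⟩ := mem_relIsotopyGroup_iff.mp hγ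
  have hI₁ : ((γ : Matrix (Fin n) (Fin n) R[X]).map (eval 1)).map (Ideal.Quotient.mk I) = 1 := by
    rw [← map_map_polynomialMap_eval_one, hI, Matrix.map_one _ eval_zero eval_one]
  refine ⟨γ.isUnit.map (evalRingHom (1 : R)).mapMatrix, fun i j => ?_, γ, γ.isUnit,
    fun i j => ⟨?_, fun m => ?_⟩, rfl⟩
  · exact Ideal.Quotient.eq_zero_iff_mem.mp (map_sub_one_apply_eq_zero _ hI₁ i j)
  · rw [coeff_zero_eq_eval_zero]
    exact map_sub_one_apply_eq_zero (evalRingHom (0 : R)) h0 i j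
  · rw [← Ideal.Quotient.eq_zero_iff_mem, ← coeff_map, ← coe_mapRingHom,
      map_sub_one_apply_eq_zero _ hI i j, coeff_zero]

theorem e₁_vecMul_map {R S : Type*} [CommRing R] [CommRing S] {n : ℕ} (f : R →+* S)
    (M : Matrix (Fin n) (Fin n) R) : e₁ S n ᵥ* M.map f = f ∘ (e₁ R n ᵥ* M) := by
  have he₁ : f ∘ e₁ R n = e₁ S n := by
    funext i
    simp only [Function.comp_apply, e₁]
    split_ifs <;> simp
  funext j
  rw [Function.comp_apply, RingHom.map_vecMul, he₁]

theorem statement14_general (R : Type*) [CommRing R] (I : Ideal R)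
    (g : R ⧸ I →+* R) (hg : (Ideal.Quotient.mk I).comp g = RingHom.id (R ⧸ I))
    (n : ℕ)
    (hUm : ∀ v : Fin n → R, IsUnimodularRow R v →
      ∃ M : Matrix (Fin n) (Fin n) R, IsIsotopicToId R M ∧ Matrix.vecMul (e₁ R n) M = v)
    (v₁ v₂ : Fin n → R) (hv₁ : IsUnimodularRow R v₁) (hv₂ : IsUnimodularRow R v₂)
    (hcong : ∀ i, v₁ i - v₂ i ∈ I) :
    ∃ β : Matrix (Fin n) (Fin n) R, IsIsotopicToIdRel R I β ∧ Matrix.vecMul v₂ β = v₁ := by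
  obtain ⟨M₁, ⟨-, α₁, hα₁, hα₁0, rfl⟩, rfl⟩ := hUm v₁ hv₁
  obtain ⟨M₂, ⟨-, α₂, hα₂, hα₂0, rfl⟩, rfl⟩ := hUm v₂ hv₂
  set h := g.comp (Ideal.Quotient.mk I)
  have hh : (Ideal.Quotient.mk I).comp h = Ideal.Quotient.mk I := by
    rw [← RingHom.comp_assoc, hg, RingHom.id_comp]
  set u₁ := hα₁.unit
  set u₂ := hα₂.unit
  let φ := Units.map ((mapRingHom h).mapMatrix :
    Matrix (Fin n) (Fin n) R[X] →+* Matrix (Fin n) (Fin n) R[X]).toMonoidHom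
  let ev₁ := Units.map ((evalRingHom (1 : R)).mapMatrix :
    Matrix (Fin n) (Fin n) R[X] →+* Matrix (Fin n) (Fin n) R).toMonoidHom
  have hc₁ := inv_map_mul_mem_relIsotopyGroup h hh u₁ hα₁0
  have hc₂ := inv_map_mul_mem_relIsotopyGroup h hh u₂ hα₂0
  refine ⟨_, isIsotopicToIdRel_eval_one (mul_mem (inv_mem hc₂) hc₁), ?_⟩
  have key : e₁ R n ᵥ* (ev₁ (φ u₂) : Matrix (Fin n) (Fin n) R) =
      e₁ R n ᵥ* (ev₁ (φ u₁) : Matrix (Fin n) (Fin n) R) := by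
    have hev (u : (Matrix (Fin n) (Fin n) R[X])ˣ) : (ev₁ (φ u) : Matrix (Fin n) (Fin n) R) =
        ((u : Matrix (Fin n) (Fin n) R[X]).map (eval 1)).map h :=
      map_map_polynomialMap_eval_one h (u : Matrix (Fin n) (Fin n) R[X])
    rw [hev, hev, e₁_vecMul_map, e₁_vecMul_map]
    funext i
    exact congrArg g (Ideal.Quotient.eq.mpr (hcong i)).symm
  have := vecMul_inv_mul_mul_inv_mul (a₁ := ev₁ u₁) (a₂ := ev₁ u₂) key
  simp only [← map_inv, ← map_mul] at this
  exact this

/-- Suppose `R → R/I` has a ring section and `Um_n(R) = e₁ · H_n(R)` for some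
`n ≥ 2`. If `v₁, v₂` are unimodular rows with `v₁ ≡ v₂ (mod I)`, then `v₁ = v₂ β` for some
`β ∈ H_n(R, I)`. -/
theorem statement14 (R : Type*) [CommRing R] (I : Ideal R)
    (g : R ⧸ I →+* R) (hg : (Ideal.Quotient.mk I).comp g = RingHom.id (R ⧸ I))
    (n : ℕ) (hn : 2 ≤ n)
    (hUm : ∀ v : Fin n → R, IsUnimodularRow R v →
      ∃ M : Matrix (Fin n) (Fin n) R, IsIsotopicToId R M ∧ Matrix.vecMul (e₁ R n) M = v)
    (v₁ v₂ : Fin n → R) (hv₁ : IsUnimodularRow R v₁) (hv₂ : IsUnimodularRow R v₂)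
    (hcong : ∀ i, v₁ i - v₂ i ∈ I) :
    ∃ β : Matrix (Fin n) (Fin n) R, IsIsotopicToIdRel R I β ∧ Matrix.vecMul v₂ β = v₁ :=
  statement14_general R I g hg n hUm v₁ v₂ hv₁ hv₂ hcong
end
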